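/- arXiv:2309.01807 — 3 statements merged into one kernel-verified Lean document; each statement's English description precedes it below -/
import Mathlib

section
/- Let Ω be a finite nonempty type and let p, q : Ω → ℝ satisfy p x > 0 and q x > 0 for all x, ∑_x p x = 1 and ∑_x q x = 1. If f : Ω → ℝ satisfies f x > 0 for all x and ∑_x p x * Real.log (f x) − ∑_x q x * f x + 1 = ∑_x p x * Real.log (p x / q x), then f x = p x / q x for every x ∈ Ω. -/
/-!
Writing `u = q x * f x / p x`, the `x`-th summand of the objective differs from its value at
`f = p / q` by `p x * (log u - u + 1)`, which is `≤ 0` by `log u ≤ u - 1` and vanishes only at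
`u = 1`. So the objective is maximised pointwise, and only there, by the density ratio.
-/

open Real Finset

theorem mul_log_sub_mul_lt_of_ne {a b t : ℝ} (ha : 0 < a) (hb : 0 < b) (ht : 0 < t)
    (hne : t ≠ a / b) : a * log t - b * t < a * log (a / b) - a := by
  have hu : b * t / a ≠ 1 := by
    rwa [Ne, div_eq_one_iff_eq ha.ne', mul_comm, ← eq_div_iff_mul_eq hb.ne']
  have key : log (b * t / a) < b * t / a - 1 := log_lt_sub_one_of_pos (by positivity) hu
  rw [log_div (by positivity) ha.ne', log_mul hb.ne' ht.ne'] at key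
  rw [log_div ha.ne' hb.ne']
  have := mul_lt_mul_of_pos_left key ha
  rw [mul_sub, mul_sub, mul_div_cancel₀ _ ha.ne'] at this
  linarith

theorem mul_log_sub_mul_le {a b t : ℝ} (ha : 0 < a) (hb : 0 < b) (ht : 0 < t) :
    a * log t - b * t ≤ a * log (a / b) - a := by
  rcases eq_or_ne t (a / b) with rfl | hne
  · rw [mul_div_cancel₀ _ hb.ne']
  · exact (mul_log_sub_mul_lt_of_ne ha hb ht hne).le

theorem density_ratio_variational_max_unique_general
    {Ω : Type*} [Fintype Ω]
    (p q : Ω → ℝ)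
    (hp : ∀ x, 0 < p x) (hq : ∀ x, 0 < q x)
    (hps : ∑ x, p x = 1)
    (f : Ω → ℝ) (hf : ∀ x, 0 < f x)
    (hmax : (∑ x, p x * Real.log (f x)) - (∑ x, q x * f x) + 1
      = ∑ x, p x * Real.log (p x / q x)) :
    ∀ x, f x = p x / q x := by
  by_contra! ⟨x₀, hx₀⟩
  have hlt : ∑ x, (p x * log (f x) - q x * f x) < ∑ x, (p x * log (p x / q x) - p x) :=
    sum_lt_sum (fun y _ ↦ mul_log_sub_mul_le (hp y) (hq y) (hf y))
      ⟨x₀, mem_univ x₀, mul_log_sub_mul_lt_of_ne (hp x₀) (hq x₀) (hf x₀) hx₀⟩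
  rw [sum_sub_distrib, sum_sub_distrib, hps] at hlt
  linarith

/-- Uniqueness of the maximizer of the variational objective
`G f = ∑ x, p x * log (f x) − ∑ x, q x * f x + 1`: if a positive `f` attains the
maximal value `∑ x, p x * log (p x / q x)` (the KL divergence), then `f = p/q`. -/
theorem density_ratio_variational_max_unique
    {Ω : Type*} [Fintype Ω] [Nonempty Ω]
    (p q : Ω → ℝ)
    (hp : ∀ x, 0 < p x) (hq : ∀ x, 0 < q x)
    (hps : ∑ x, p x = 1) (hqs : ∑ x, q x = 1)
    (f : Ω → ℝ) (hf : ∀ x, 0 < f x)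
    (hmax : (∑ x, p x * Real.log (f x)) - (∑ x, q x * f x) + 1
      = ∑ x, p x * Real.log (p x / q x)) :
    ∀ x, f x = p x / q x :=
  density_ratio_variational_max_unique_general p q hp hq hps f hf hmax
end

section
/- Let S, A be finite nonempty types, P_tr and P_te transition kernels, π a policy, d0 an initial distribution, and γ a discount factor with 0 ≤ γ < 1. Suppose d_tr satisfies the Bellman flow equation for (P_tr, π, d0, γ) with d_tr s a > 0 for all s, a, and d_te satisfies the Bellman flow equation for (P_te, π, d0, γ). Let r : S → A → ℝ and set J_te := ∑_{s,a} d_te s a * r s a. Let μ : S → A → ℝ satisfy μ s a > 0 for all s, a and define β s a := d_tr s a / μ s a. Suppose there is a finite index set I, coefficients λ : I → ℝ with λ i ≥ 0 and ∑_i λ i = 1, and functions w_i : S → A → ℝ for i ∈ I, such that d_te s a / d_tr s a = ∑_i λ i * w_i s a for all s, a. Then for every q : S → A → ℝ there exists i ∈ I with |(1 − γ) * ∑_{s} d0 s * q(s, π) − J_te| ≤ |∑_{s,a,s'} μ s a * P_te s a s' * w_i s a * β s a * (q s a − γ * q(s', π)) − ∑_{s,a} d_tr s a * w_i s a * r s a|.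 -/
/-!
Let `X s a = q s a - γ * ∑ s', Pte s a s' * q(s', π)` be the Bellman residual of `q`. Summing the
flow equation for `d_te` against `q` gives `∑ d_te * X = (1 - γ) * ∑ d0 * q(·, π)`, so the
evaluation error is `∑ d_te * (X - r)`. Since `μ * β = d_tr` and each `Pte s a` is a probability
vector, the loss at `w_i` is `∑ d_tr * w_i * (X - r)`, which is linear in `w_i`. As
`d_te = (∑ λ_i w_i) * d_tr`, the error is the `λ`-average of these losses, and by convexity of `|·|`
one of them dominates it in absolute value.
-/

open Finset

lemma exists_abs_sum_mul_le_abs {I : Type*} [Fintype I] {w : I → ℝ} (hw₀ : ∀ i, 0 ≤ w i)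
    (hw₁ : ∑ i, w i = 1) (y : I → ℝ) : ∃ i, |∑ j, w j * y j| ≤ |y i| := by
  obtain ⟨i, -, hi⟩ := (convexOn_univ_norm (E := ℝ)).exists_ge_of_centerMass (t := univ)
    (fun i _ ↦ hw₀ i) (by rw [hw₁]; exact one_pos) (fun _ _ ↦ Set.mem_univ _)
  exact ⟨i, by simpa [Finset.centerMass, hw₁] using hi⟩

section Occupancy

variable {S A : Type*} [Fintype S] [Fintype A]

lemma sum_occupancy_mul_bellman_residual {P : S → A → S → ℝ} {π : S → A → ℝ} {d0 : S → ℝ}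
    {γ : ℝ} {d : S → A → ℝ}
    (hd : ∀ s a, d s a
      = (1 - γ) * d0 s * π s a + γ * π s a * ∑ sb, ∑ ab, P sb ab s * d sb ab)
    (q : S → A → ℝ) :
    ∑ s, ∑ a, d s a * (q s a - γ * ∑ s', P s a s' * ∑ a', π s' a' * q s' a')
      = (1 - γ) * ∑ s, d0 s * ∑ a, π s a * q s a := by
  set V : S → ℝ := fun s ↦ ∑ a, π s a * q s a
  have hq : ∀ s, ∑ a, d s a * q s a
      = ((1 - γ) * d0 s + γ * ∑ sb, ∑ ab, P sb ab s * d sb ab) * V s := by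
    intro s
    rw [mul_sum]
    exact sum_congr rfl fun a _ ↦ by rw [hd]; ring
  have hswap : ∑ s, (∑ sb, ∑ ab, P sb ab s * d sb ab) * V s
      = ∑ sb, ∑ ab, d sb ab * ∑ s, P sb ab s * V s := by
    simp only [sum_mul, mul_sum]
    rw [sum_comm]
    refine sum_congr rfl fun sb _ ↦ ?_
    rw [sum_comm]
    exact sum_congr rfl fun ab _ ↦ sum_congr rfl fun s _ ↦ by ring
  calc ∑ s, ∑ a, d s a * (q s a - γ * ∑ s', P s a s' * V s')
      = ∑ s, ∑ a, d s a * q s a - γ * ∑ s, ∑ a, d s a * ∑ s', P s a s' * V s' := by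
        simp only [mul_sub, sum_sub_distrib, mul_left_comm (d _ _) γ, ← mul_sum]
    _ = (1 - γ) * ∑ s, d0 s * V s := by
        simp only [hq, add_mul, sum_add_distrib, mul_assoc, ← mul_sum, hswap]
        ring

lemma sum_kernel_mul_ratio_residual {P : S → A → S → ℝ} (hP : ∀ s a, ∑ s', P s a s' = 1)
    {μ β d : S → A → ℝ} (hμ : ∀ s a, μ s a ≠ 0) (hβ : ∀ s a, β s a = d s a / μ s a)
    (w q : S → A → ℝ) (γ : ℝ) (V : S → ℝ) :
    ∑ s, ∑ a, ∑ s', μ s a * P s a s' * w s a * β s a * (q s a - γ * V s')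
      = ∑ s, ∑ a, d s a * w s a * (q s a - γ * ∑ s', P s a s' * V s') := by
  refine sum_congr rfl fun s _ ↦ sum_congr rfl fun a _ ↦ ?_
  have hμβ : μ s a * β s a = d s a := by rw [hβ, mul_div_cancel₀ _ (hμ s a)]
  have hmean : ∑ s', P s a s' * (q s a - γ * V s') = q s a - γ * ∑ s', P s a s' * V s' := by
    simp only [mul_sub, sum_sub_distrib, ← sum_mul, hP, one_mul, mul_left_comm _ γ, ← mul_sum]
  rw [← hmean, mul_sum, ← hμβ]
  exact sum_congr rfl fun s' _ ↦ by ring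

lemma sum_mixture_weight_mul_eq {I : Type*} [Fintype I] {d d' : S → A → ℝ}
    (hd : ∀ s a, d s a ≠ 0) {lam : I → ℝ} {w : I → S → A → ℝ}
    (hmix : ∀ s a, d' s a / d s a = ∑ i, lam i * w i s a) (f : S → A → ℝ) :
    ∑ i, lam i * ∑ s, ∑ a, d s a * w i s a * f s a = ∑ s, ∑ a, d' s a * f s a := by
  have hd' : ∀ s a, d' s a = (∑ i, lam i * w i s a) * d s a := fun s a ↦ by
    rw [← hmix, div_mul_cancel₀ _ (hd s a)]
  simp only [hd', mul_sum, sum_mul]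
  rw [sum_comm]
  refine sum_congr rfl fun s _ ↦ ?_
  rw [sum_comm]
  exact sum_congr rfl fun a _ ↦ sum_congr rfl fun i _ ↦ by ring

end Occupancy

theorem q_ope_error_le_sup_weight_class_general
    {S A : Type*} [Fintype S] [Fintype A]
    (Pte : S → A → S → ℝ) (π : S → A → ℝ) (d0 : S → ℝ) (γ : ℝ)
    (hPte_sum : ∀ s a, ∑ s', Pte s a s' = 1)
    (dtr dte : S → A → ℝ)
    (hdtr_pos : ∀ s a, 0 < dtr s a)
    (hdte : ∀ s a, dte s a
      = (1 - γ) * d0 s * π s a + γ * π s a * ∑ sb, ∑ ab, Pte sb ab s * dte sb ab)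
    (r : S → A → ℝ) (Jte : ℝ) (hJte : Jte = ∑ s, ∑ a, dte s a * r s a)
    (μ : S → A → ℝ) (hμ : ∀ s a, 0 < μ s a)
    (β : S → A → ℝ) (hβ : ∀ s a, β s a = dtr s a / μ s a)
    {I : Type*} [Fintype I]
    (lam : I → ℝ) (hlam_nonneg : ∀ i, 0 ≤ lam i) (hlam_sum : ∑ i, lam i = 1)
    (wi : I → S → A → ℝ)
    (hconv : ∀ s a, dte s a / dtr s a = ∑ i, lam i * wi i s a) :
    ∀ q : S → A → ℝ, ∃ i : I,
      |(1 - γ) * (∑ s, d0 s * ∑ a, π s a * q s a) - Jte|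
        ≤ |(∑ s, ∑ a, ∑ s', μ s a * Pte s a s' * wi i s a * β s a *
              (q s a - γ * ∑ a', π s' a' * q s' a'))
            - (∑ s, ∑ a, dtr s a * wi i s a * r s a)| := by
  intro q
  set X : S → A → ℝ := fun s a ↦ q s a - γ * ∑ s', Pte s a s' * ∑ a', π s' a' * q s' a'
  have hloss : ∀ i, (∑ s, ∑ a, ∑ s', μ s a * Pte s a s' * wi i s a * β s a *
        (q s a - γ * ∑ a', π s' a' * q s' a')) - ∑ s, ∑ a, dtr s a * wi i s a * r s a
      = ∑ s, ∑ a, dtr s a * wi i s a * (X s a - r s a) := fun i ↦ by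
    rw [sum_kernel_mul_ratio_residual hPte_sum (fun s a ↦ (hμ s a).ne') hβ]
    simp only [X, mul_sub, sum_sub_distrib]
  have herror : (1 - γ) * (∑ s, d0 s * ∑ a, π s a * q s a) - Jte
      = ∑ i, lam i * ∑ s, ∑ a, dtr s a * wi i s a * (X s a - r s a) := by
    rw [sum_mixture_weight_mul_eq (fun s a ↦ (hdtr_pos s a).ne') hconv, hJte,
      ← sum_occupancy_mul_bellman_residual hdte q]
    simp only [X, mul_sub, sum_sub_distrib]
  obtain ⟨i, hi⟩ := exists_abs_sum_mul_le_abs hlam_nonneg hlam_sum _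
  exact ⟨i, by rw [herror, hloss]; exact hi⟩

/-- Upper bound on the OPE error of a candidate Q-function via the weight class:
if the density ratio `d_te/d_tr` lies in the convex hull of `{w_i}`, then for
any discriminator `q` the evaluation error is bounded by the Q-loss at some
`w_i`. -/
theorem q_ope_error_le_sup_weight_class
    {S A : Type*} [Fintype S] [Fintype A] [Nonempty S] [Nonempty A]
    (Ptr Pte : S → A → S → ℝ) (π : S → A → ℝ) (d0 : S → ℝ) (γ : ℝ)
    (hPtr_nonneg : ∀ s a s', 0 ≤ Ptr s a s')
    (hPtr_sum : ∀ s a, ∑ s', Ptr s a s' = 1)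
    (hPte_nonneg : ∀ s a s', 0 ≤ Pte s a s')
    (hPte_sum : ∀ s a, ∑ s', Pte s a s' = 1)
    (hπ_nonneg : ∀ s a, 0 ≤ π s a) (hπ_sum : ∀ s, ∑ a, π s a = 1)
    (hd0_nonneg : ∀ s, 0 ≤ d0 s) (hd0_sum : ∑ s, d0 s = 1)
    (hγ0 : 0 ≤ γ) (hγ1 : γ < 1)
    (dtr dte : S → A → ℝ)
    (hdtr : ∀ s a, dtr s a
      = (1 - γ) * d0 s * π s a + γ * π s a * ∑ sb, ∑ ab, Ptr sb ab s * dtr sb ab)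
    (hdtr_pos : ∀ s a, 0 < dtr s a)
    (hdte : ∀ s a, dte s a
      = (1 - γ) * d0 s * π s a + γ * π s a * ∑ sb, ∑ ab, Pte sb ab s * dte sb ab)
    (r : S → A → ℝ) (Jte : ℝ) (hJte : Jte = ∑ s, ∑ a, dte s a * r s a)
    (μ : S → A → ℝ) (hμ : ∀ s a, 0 < μ s a)
    (β : S → A → ℝ) (hβ : ∀ s a, β s a = dtr s a / μ s a)
    {I : Type*} [Fintype I]
    (lam : I → ℝ) (hlam_nonneg : ∀ i, 0 ≤ lam i) (hlam_sum : ∑ i, lam i = 1)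
    (wi : I → S → A → ℝ)
    (hconv : ∀ s a, dte s a / dtr s a = ∑ i, lam i * wi i s a) :
    ∀ q : S → A → ℝ, ∃ i : I,
      |(1 - γ) * (∑ s, d0 s * ∑ a, π s a * q s a) - Jte|
        ≤ |(∑ s, ∑ a, ∑ s', μ s a * Pte s a s' * wi i s a * β s a *
              (q s a - γ * ∑ a', π s' a' * q s' a'))
            - (∑ s, ∑ a, dtr s a * wi i s a * r s a)| :=
  q_ope_error_le_sup_weight_class_general Pte π d0 γ hPte_sum dtr dte hdtr_pos hdte r Jte hJte μ hμ
    β hβ lam hlam_nonneg hlam_sum wi hconv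
end

section
/- Let S, A be finite nonempty types, P a transition kernel, π a policy, d0 an initial distribution, γ a discount factor with 0 ≤ γ < 1, and r : S → A → ℝ a reward. Suppose d : S → A → ℝ satisfies the Bellman flow equation for (P, π, d0, γ) and Q : S → A → ℝ satisfies the Bellman equation for (P, π, r, γ). Then (1 − γ) * ∑_{s} d0 s * Q(s, π) = ∑_{s,a} d s a * r s a. -/
/-!
Bellman's equation `Q = r + γ T Q` and the flow equation `d = (1 - γ) μ₀ + γ T* d` are
dual: they involve the state-action transition operator `T` and its adjoint. Pairing `d`
with `r = Q - γ T Q` and moving `T` across gives `⟨d - γ T* d, Q⟩ = (1 - γ) ⟨μ₀, Q⟩`,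
where `μ₀ s a = d0 s * π s a` is the initial state-action distribution.
-/

open Matrix

theorem dotProduct_eq_of_flow_of_bellman {ι R : Type*} [Fintype ι] [CommRing R]
    (M : Matrix ι ι R) (γ : R) (μ r d Q : ι → R)
    (hd : d = (1 - γ) • μ + γ • (d ᵥ* M)) (hQ : Q = r + γ • (M *ᵥ Q)) :
    (1 - γ) * (μ ⬝ᵥ Q) = d ⬝ᵥ r := by
  have hr : r = Q - γ • (M *ᵥ Q) := eq_sub_of_add_eq hQ.symm
  have hμ : (1 - γ) • μ = d - γ • (d ᵥ* M) := eq_sub_of_add_eq hd.symm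
  calc (1 - γ) * (μ ⬝ᵥ Q) = ((1 - γ) • μ) ⬝ᵥ Q := by rw [smul_dotProduct, smul_eq_mul]
    _ = d ⬝ᵥ Q - γ * (d ᵥ* M ⬝ᵥ Q) := by rw [hμ, sub_dotProduct, smul_dotProduct, smul_eq_mul]
    _ = d ⬝ᵥ r := by rw [hr, dotProduct_sub, dotProduct_smul, dotProduct_mulVec, smul_eq_mul]

section StateAction

variable {S A R : Type*} [Fintype S] [Fintype A] [CommSemiring R]

def stateActionTransition (P : S → A → S → R) (π : S → A → R) :
    Matrix (S × A) (S × A) R :=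
  fun x y => P x.1 x.2 y.1 * π y.1 y.2

theorem stateActionTransition_mulVec (P : S → A → S → R) (π : S → A → R)
    (Q : S → A → R) (s : S) (a : A) :
    (stateActionTransition P π *ᵥ Function.uncurry Q) (s, a)
      = ∑ s', P s a s' * ∑ a', π s' a' * Q s' a' := by
  simp only [mulVec, dotProduct, stateActionTransition, Fintype.sum_prod_type,
    Function.uncurry_apply_pair, Finset.mul_sum, mul_assoc]

theorem vecMul_stateActionTransition (P : S → A → S → R) (π : S → A → R)
    (d : S → A → R) (s : S) (a : A) :
    (Function.uncurry d ᵥ* stateActionTransition P π) (s, a)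
      = π s a * ∑ sb, ∑ ab, P sb ab s * d sb ab := by
  simp only [vecMul, dotProduct, stateActionTransition, Fintype.sum_prod_type,
    Function.uncurry_apply_pair, Finset.mul_sum]
  exact Finset.sum_congr rfl fun _ _ => Finset.sum_congr rfl fun _ _ => by ring

end StateAction

theorem discounted_return_eq_occupancy_form_general
    {S A : Type*} [Fintype S] [Fintype A]
    (P : S → A → S → ℝ) (π : S → A → ℝ) (d0 : S → ℝ) (γ : ℝ) (r : S → A → ℝ)
    (d : S → A → ℝ)
    (hd : ∀ s a, d s a
      = (1 - γ) * d0 s * π s a + γ * π s a * ∑ sb, ∑ ab, P sb ab s * d sb ab)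
    (Q : S → A → ℝ)
    (hQ : ∀ s a, Q s a = r s a + γ * ∑ s', P s a s' * ∑ a', π s' a' * Q s' a') :
    (1 - γ) * (∑ s, d0 s * ∑ a, π s a * Q s a) = ∑ s, ∑ a, d s a * r s a := by
  let M := stateActionTransition P π
  let μ : S × A → ℝ := fun x => d0 x.1 * π x.1 x.2
  have hflow : Function.uncurry d
      = (1 - γ) • μ + γ • (Function.uncurry d ᵥ* M) := by
    ext ⟨s, a⟩
    simp only [Pi.add_apply, Pi.smul_apply, smul_eq_mul, vecMul_stateActionTransition,
      Function.uncurry_apply_pair, hd s a, μ, M]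
    ring
  have hbellman : Function.uncurry Q
      = Function.uncurry r + γ • (M *ᵥ Function.uncurry Q) := by
    ext ⟨s, a⟩
    simp only [Pi.add_apply, Pi.smul_apply, smul_eq_mul, stateActionTransition_mulVec,
      Function.uncurry_apply_pair, hQ s a, M]
  have key := dotProduct_eq_of_flow_of_bellman M γ μ _ _ _ hflow hbellman
  simpa only [dotProduct, Fintype.sum_prod_type, Function.uncurry_apply_pair, μ,
    mul_assoc, ← Finset.mul_sum] using key

/-- The two expressions for the discounted return coincide: the initial-state
value form `(1 − γ) E_{d0}[V^π]` equals the occupancy form `E_{d^π}[r]`, where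
`d` solves the Bellman flow equation and `Q` solves the Bellman equation. -/
theorem discounted_return_eq_occupancy_form
    {S A : Type*} [Fintype S] [Fintype A] [Nonempty S] [Nonempty A]
    (P : S → A → S → ℝ) (π : S → A → ℝ) (d0 : S → ℝ) (γ : ℝ) (r : S → A → ℝ)
    (hP_nonneg : ∀ s a s', 0 ≤ P s a s')
    (hP_sum : ∀ s a, ∑ s', P s a s' = 1)
    (hπ_nonneg : ∀ s a, 0 ≤ π s a) (hπ_sum : ∀ s, ∑ a, π s a = 1)
    (hd0_nonneg : ∀ s, 0 ≤ d0 s) (hd0_sum : ∑ s, d0 s = 1)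
    (hγ0 : 0 ≤ γ) (hγ1 : γ < 1)
    (d : S → A → ℝ)
    (hd : ∀ s a, d s a
      = (1 - γ) * d0 s * π s a + γ * π s a * ∑ sb, ∑ ab, P sb ab s * d sb ab)
    (Q : S → A → ℝ)
    (hQ : ∀ s a, Q s a = r s a + γ * ∑ s', P s a s' * ∑ a', π s' a' * Q s' a') :
    (1 - γ) * (∑ s, d0 s * ∑ a, π s a * Q s a) = ∑ s, ∑ a, d s a * r s a :=
  discounted_return_eq_occupancy_form_general P π d0 γ r d hd Q hQ
end
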